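/- Let d ≥ 2, let F_d be the free group on free generators a_1, …, a_d, and let μ be the uniform probability measure on the symmetric set {a_1^{±1}, …, a_d^{±1}} (each of the 2d elements has mass 1/(2d)). Then the Avez entropy of the simple random walk satisfies lim_{n→∞} H(μ^{*n})/n = ((d−1)/d) · log(2d−1). -/

import Mathlib

open MeasureTheory Filter Topology

/-- Convolution powers of a probability measure on a discrete group:
`convPow μ 0 = δ_e` and `convPow μ (n+1) {g} = ∑_h μ {h} * convPow μ n {h⁻¹ g}`. -/
noncomputable def convPow {Γ : Type*} [Group Γ] [MeasurableSpace Γ]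
    (μ : Measure Γ) : ℕ → Measure Γ
  | 0 => Measure.dirac 1
  | n + 1 => (μ.prod (convPow μ n)).map (fun p => p.1 * p.2)

/-- The Shannon entropy `H(ν) = ∑_g −ν({g}) log ν({g})` of a (finitely supported)
measure on a countable discrete space. -/
noncomputable def shannonEntropy {Γ : Type*} [MeasurableSpace Γ] (ν : Measure Γ) : ℝ :=
  ∑' g : Γ, -((ν {g}).toReal * Real.log (ν {g}).toReal)

/-!
Left multiplication by a letter changes the length of a reduced word by `±1`, so the word length
`|X_n|` of the walk is the radial walk on the `2d`-regular tree: from `k ≥ 1` it steps down with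
probability `1/(2d)` and up otherwise, and `μ^{*n}` is constant on spheres. The sphere of radius `k`
has between `(2d-1)^k` and `2(2d-1)^k` elements, so conditioning on `|X_n|` gives
`H(μ^{*n}) = E|X_n| · log(2d-1) + O(log n)`. Away from the identity `|X_n|` drifts by `(d-1)/d`, and
the walk returns to the identity with exponentially small probability (the moment `E 2^{-|X_n|}`
contracts by `7/8` per step), hence `E|X_n| = n(d-1)/d + O(1)`.
-/

open scoped ENNReal
open Finset Real

section ConvPow

variable {Γ : Type*} [Group Γ] [MeasurableSpace Γ] [Countable Γ] [MeasurableSingletonClass Γ]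

instance isProbabilityMeasure_convPow (μ : Measure Γ) [IsProbabilityMeasure μ] (n : ℕ) :
    IsProbabilityMeasure (convPow μ n) := by
  induction n with
  | zero => exact Measure.dirac.isProbabilityMeasure
  | succ n ih => exact Measure.isProbabilityMeasure_map Measurable.of_discrete.aemeasurable

theorem convPow_succ_apply_singleton (μ : Measure Γ) (n : ℕ) (g : Γ) :
    convPow μ (n + 1) {g} = ∫⁻ x, convPow μ n {x⁻¹ * g} ∂μ := by
  have hmul : Measurable fun p : Γ × Γ => p.1 * p.2 := .of_discrete
  rw [convPow, Measure.map_apply hmul (measurableSet_singleton g),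
    Measure.prod_apply (hmul (measurableSet_singleton g))]
  congr! with x
  ext y
  simp [eq_inv_mul_iff_mul_eq]

theorem tsum_convPow_apply_singleton (μ : Measure Γ) [IsProbabilityMeasure μ] (n : ℕ) :
    ∑' g, convPow μ n {g} = 1 := by
  simpa using Measure.tsum_indicator_apply_singleton (convPow μ n) Set.univ MeasurableSet.univ

end ConvPow

theorem sum_negMulLog_le_log_card {ι : Type*} {s : Finset ι} {p : ι → ℝ}
    (h0 : ∀ i ∈ s, 0 ≤ p i) (h1 : ∑ i ∈ s, p i = 1) :
    ∑ i ∈ s, negMulLog (p i) ≤ log #s := by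
  have hs : (0 : ℝ) < #s := by
    rcases s.eq_empty_or_nonempty with rfl | hs
    · simp at h1
    · exact_mod_cast hs.card_pos
  have jensen := concaveOn_negMulLog.le_map_sum (t := s) (w := fun _ => (#s : ℝ)⁻¹) (p := p)
    (fun _ _ => by positivity) (by simp [hs.ne']) fun i hi => Set.mem_Ici.mpr (h0 i hi)
  simp only [smul_eq_mul, ← mul_sum, h1, mul_one, negMulLog, log_inv] at jensen
  rw [inv_mul_le_iff₀ hs] at jensen
  simpa [negMulLog, hs.ne'] using jensen

theorem tendsto_div_natCast_nhds_zero_of_le_log {r : ℕ → ℝ} {C : ℝ} (h0 : ∀ n, 0 ≤ r n)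
    (hC : ∀ n, r n ≤ C + log (n + 1)) : Tendsto (fun n => r n / n) atTop (𝓝 0) := by
  have hlog : Tendsto (fun n : ℕ => log ((n : ℝ) + 1) / n) atTop (𝓝 0) := by
    have := (tendsto_pow_log_div_mul_add_atTop 1 (-1) 1 one_ne_zero).comp
      (tendsto_atTop_add_const_right atTop 1 tendsto_natCast_atTop_atTop)
    simpa [Function.comp_def] using this
  have hbound : Tendsto (fun n : ℕ => C / n + log ((n : ℝ) + 1) / n) atTop (𝓝 0) := by
    simpa using (tendsto_const_div_atTop_nhds_zero_nat C).add hlog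
  refine tendsto_of_tendsto_of_tendsto_of_le_of_le tendsto_const_nhds hbound
    (fun n => div_nonneg (h0 n) n.cast_nonneg) fun n => ?_
  rw [← add_div]
  exact div_le_div_of_nonneg_right (hC n) n.cast_nonneg

theorem mul_negMulLog_eq (c x : ℝ) : c * negMulLog x = negMulLog (c * x) + c * x * log c := by
  rw [negMulLog_mul]
  simp only [negMulLog]
  ring

-- `f k` is the mass of each of the `N k` points of the `k`-th sphere.
theorem sum_mul_negMulLog_bounds {n b : ℕ} {N : ℕ → ℕ} {f : ℕ → ℝ} (hb : 1 ≤ b)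
    (hN : ∀ k, b ^ k ≤ N k ∧ N k ≤ 2 * b ^ k) (hf : ∀ k, 0 ≤ f k)
    (hmass : ∑ k ∈ range (n + 1), N k * f k = 1) :
    (∑ k ∈ range (n + 1), k * (N k * f k)) * log b ≤
        ∑ k ∈ range (n + 1), N k * negMulLog (f k) ∧
      ∑ k ∈ range (n + 1), N k * negMulLog (f k) ≤
        (∑ k ∈ range (n + 1), k * (N k * f k)) * log b + log 2 + log (n + 1) := by
  simp only [mul_negMulLog_eq (N _ : ℝ), sum_add_distrib, mul_assoc]
  obtain ⟨p, hp⟩ : ∃ p : ℕ → ℝ, ∀ k, (N k : ℝ) * f k = p k := ⟨_, fun _ => rfl⟩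
  simp only [hp, ← mul_assoc] at hmass ⊢
  have hlogN k : k * log b ≤ log (N k) ∧ log (N k) ≤ k * log b + log 2 := by
    have hbk : (0 : ℝ) < (b : ℝ) ^ k := by positivity
    have hbN : (b : ℝ) ^ k ≤ N k := by exact_mod_cast (hN k).1
    rw [← log_pow, add_comm, ← log_mul two_ne_zero hbk.ne']
    exact ⟨log_le_log hbk hbN, log_le_log (hbk.trans_le hbN) (by exact_mod_cast (hN k).2)⟩
  have hp0 k : 0 ≤ p k := hp k ▸ mul_nonneg (N k).cast_nonneg (hf k)
  have hp1 k (hk : k ∈ range (n + 1)) : p k ≤ 1 :=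
    hmass ▸ single_le_sum (fun j _ => hp0 j) hk
  have hent0 : 0 ≤ ∑ k ∈ range (n + 1), negMulLog (p k) :=
    sum_nonneg fun k hk => negMulLog_nonneg (hp0 k) (hp1 k hk)
  have hent1 : ∑ k ∈ range (n + 1), negMulLog (p k) ≤ log (n + 1) := by
    simpa using sum_negMulLog_le_log_card (fun k _ => hp0 k) hmass
  have hlower : ∑ k ∈ range (n + 1), k * p k * log b ≤ ∑ k ∈ range (n + 1), p k * log (N k) :=
    sum_le_sum fun k _ => by
      rw [mul_comm (k : ℝ), mul_assoc]
      exact mul_le_mul_of_nonneg_left (hlogN k).1 (hp0 k)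
  have hupper : ∑ k ∈ range (n + 1), p k * log (N k) ≤
      ∑ k ∈ range (n + 1), k * p k * log b + log 2 := by
    calc ∑ k ∈ range (n + 1), p k * log (N k)
        ≤ ∑ k ∈ range (n + 1), p k * (k * log b + log 2) :=
          sum_le_sum fun k _ =>
            mul_le_mul_of_nonneg_left (hlogN k).2 (hp0 k)
      _ = ∑ k ∈ range (n + 1), k * p k * log b + (∑ k ∈ range (n + 1), p k) * log 2 := by
          rw [sum_mul, ← sum_add_distrib]
          exact sum_congr rfl fun k _ => by ring
      _ = _ := by rw [hmass, one_mul]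
  rw [sum_mul]
  constructor <;> linarith

-- One step of the distance to the root of the random walk on the `(r + 1)`-regular tree, acting
-- on test functions: from the root every neighbour is farther, otherwise `r` of the `r + 1` are.
noncomputable def radialStep (r : ℕ) (w : ℕ → ℝ≥0∞) : ℕ → ℝ≥0∞
  | 0 => w 1
  | k + 1 => ((r : ℝ≥0∞) + 1)⁻¹ * (w k + r * w (k + 2))

-- The drift `(r - 1)/(r + 1)` of the distance, stated without subtraction.
theorem radialStep_natCast_add (r k : ℕ) :
    radialStep r (↑) k + 2 * ((r : ℝ≥0∞) + 1)⁻¹ =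
      k + 1 + 2 * ((r : ℝ≥0∞) + 1)⁻¹ * if k = 0 then 1 else 0 := by
  cases k with
  | zero => simp [radialStep]
  | succ k =>
    rw [← ENNReal.toReal_eq_toReal_iff' (by simp [radialStep, ENNReal.mul_eq_top]) (by simp)]
    simp (disch := finiteness) [radialStep, ENNReal.toReal_mul, ENNReal.toReal_inv,
      ENNReal.toReal_add]
    field_simp
    ring

-- For `k ≥ 1` the exact factor is `(r + 4) / (2 (r + 1))`.
theorem radialStep_inv_two_pow_le {r : ℕ} (hr : 3 ≤ r) (k : ℕ) :
    radialStep r (2⁻¹ ^ ·) k ≤ 7 / 8 * 2⁻¹ ^ k := by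
  cases k with
  | zero =>
    rw [radialStep, ← ENNReal.toReal_le_toReal (by finiteness) (by finiteness)]
    norm_num
  | succ k =>
    have hr' : (3 : ℝ) ≤ r := by exact_mod_cast hr
    rw [radialStep, ← ENNReal.toReal_le_toReal (by finiteness) (by finiteness)]
    simp (disch := finiteness) [ENNReal.toReal_mul, ENNReal.toReal_inv, ENNReal.toReal_pow,
      ENNReal.toReal_add]
    field_simp
    have ht : (0 : ℝ) ≤ 2 ^ k * 2 ^ k := by positivity
    simp only [pow_succ]
    nlinarith [mul_le_mul_of_nonneg_right hr' ht]

noncomputable def radialDensity (r : ℕ) : ℕ → ℕ → ℝ≥0∞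
  | 0 => fun k => if k = 0 then 1 else 0
  | n + 1 => radialStep r (radialDensity r n)

theorem radialDensity_eq_zero_of_lt {r n k : ℕ} (h : n < k) : radialDensity r n k = 0 := by
  induction n generalizing k with
  | zero => simp [radialDensity, h.ne']
  | succ n ih =>
    obtain ⟨k, rfl⟩ := Nat.exists_eq_add_one_of_ne_zero (by omega : k ≠ 0)
    simp [radialDensity, radialStep, ih (by omega : n < k), ih (by omega : n < k + 2)]

namespace FreeGroup

variable {α : Type*}

section Sphere

variable [DecidableEq α]

theorem toWord_mk_singleton_mul {x y : α × Bool} {t : List (α × Bool)} {g : FreeGroup α}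
    (hg : g.toWord = y :: t) :
    (mk [x] * g).toWord = if x = (y.1, !y.2) then t else x :: y :: t := by
  rw [← mk_toWord (x := g), mul_mk, toWord_mk, List.singleton_append, reduce.cons,
    reduce_toWord, hg]
  simp only [Prod.ext_iff]

theorem norm_mk_singleton_mul {x y : α × Bool} {t : List (α × Bool)} {g : FreeGroup α}
    (hg : g.toWord = y :: t) :
    (mk [x] * g).norm = if x = (y.1, !y.2) then g.norm - 1 else g.norm + 1 := by
  simp only [norm, toWord_mk_singleton_mul hg, hg]
  split_ifs <;> simp

theorem toWord_mk_singleton_mul_of_norm_eq {x : α × Bool} {g : FreeGroup α}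
    (h : (mk [x] * g).norm = g.norm + 1) : (mk [x] * g).toWord = x :: g.toWord := by
  have hsub := toWord_mul_sublist (mk [x]) g
  rw [toWord_mk, reduce_singleton, List.singleton_append] at hsub
  exact hsub.eq_of_length h

theorem finite_setOf_norm_eq [Finite α] (k : ℕ) : {g : FreeGroup α | g.norm = k}.Finite :=
  ((List.finite_length_eq (α × Bool) k).image mk).subset fun g hg => ⟨g.toWord, hg, mk_toWord⟩

variable (α) in
noncomputable def sphere [Finite α] (k : ℕ) : Finset (FreeGroup α) :=
  (finite_setOf_norm_eq k).toFinset

@[simp]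
theorem mem_sphere [Finite α] {k : ℕ} {g : FreeGroup α} : g ∈ sphere α k ↔ g.norm = k :=
  Set.Finite.mem_toFinset _

variable [Fintype α]

theorem sum_norm_mk_singleton_mul {M : Type*} [AddCommMonoid M] (w : ℕ → M)
    (g : FreeGroup α) :
    ∑ x : α × Bool, w (mk [x] * g).norm =
      if g = 1 then (2 * Fintype.card α) • w 1
      else w (g.norm - 1) + (2 * Fintype.card α - 1) • w (g.norm + 1) := by
  have hcard : Fintype.card (α × Bool) = 2 * Fintype.card α := by simp [mul_comm]
  split_ifs with h1
  · simp [h1, ← hcard, norm]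
  · obtain ⟨y, t, hg⟩ := List.exists_cons_of_ne_nil (mt toWord_eq_nil_iff.mp h1)
    simp only [norm_mk_singleton_mul hg, apply_ite w]
    rw [← add_sum_erase _ _ (mem_univ (y.1, !y.2)), if_pos rfl,
      sum_congr rfl fun x hx => if_neg (ne_of_mem_erase hx), sum_const,
      card_erase_of_mem (mem_univ _), card_univ, hcard]

theorem card_filter_norm_mk_singleton_mul_eq_succ (g : FreeGroup α) :
    #{x : α × Bool | (mk [x] * g).norm = g.norm + 1} =
      if g = 1 then 2 * Fintype.card α else 2 * Fintype.card α - 1 := by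
  rw [card_filter, sum_norm_mk_singleton_mul (fun k => if k = g.norm + 1 then 1 else 0)]
  split_ifs <;> simp_all

theorem sphere_succ (k : ℕ) : sphere α (k + 1) =
    {p ∈ (univ : Finset (α × Bool)) ×ˢ sphere α k | (mk [p.1] * p.2).norm = k + 1}.image
      fun p => mk [p.1] * p.2 := by
  ext g
  simp only [mem_sphere, mem_image, mem_filter, mem_product, mem_univ, true_and]
  constructor
  · intro hg
    obtain ⟨x, t, hxt⟩ := List.exists_cons_of_length_eq_add_one hg
    have ht : (mk t).toWord = t := by
      rw [toWord_mk, (isReduced_toWord.infix (hxt ▸ List.suffix_cons x t).isInfix).reduce_eq]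
    have hg' : mk [x] * mk t = g := by rw [mul_mk, List.singleton_append, ← hxt, mk_toWord]
    refine ⟨(x, mk t), ⟨?_, hg' ▸ hg⟩, hg'⟩
    simpa [norm, ht, hxt] using hg
  · rintro ⟨p, ⟨-, hp⟩, rfl⟩
    exact hp

theorem card_sphere_succ (k : ℕ) : #(sphere α (k + 1)) =
    #(sphere α k) * if k = 0 then 2 * Fintype.card α else 2 * Fintype.card α - 1 := by
  rw [sphere_succ, card_image_of_injOn, card_filter, sum_product_right, ← smul_eq_mul,
    ← sum_const]
  · refine sum_congr rfl fun h hh => ?_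
    rw [mem_sphere] at hh
    simp only [← card_filter, ← hh, card_filter_norm_mk_singleton_mul_eq_succ, norm_eq_zero]
  · rintro ⟨x, h⟩ hp ⟨x', h'⟩ hp' heq
    simp only [coe_filter, mem_product, mem_sphere, Set.mem_ofPred_eq] at hp hp'
    have := congrArg toWord heq
    rw [toWord_mk_singleton_mul_of_norm_eq (by rw [hp.2, hp.1.2]),
      toWord_mk_singleton_mul_of_norm_eq (by rw [hp'.2, hp'.1.2]), List.cons.injEq,
      toWord_inj] at this
    exact Prod.ext this.1 this.2

theorem card_sphere_zero : #(sphere α 0) = 1 :=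
  card_eq_one.mpr ⟨1, by ext; simp⟩

theorem card_sphere_succ_eq (k : ℕ) :
    #(sphere α (k + 1)) = 2 * Fintype.card α * (2 * Fintype.card α - 1) ^ k := by
  induction k with
  | zero => simp [card_sphere_succ, card_sphere_zero]
  | succ k ih => rw [card_sphere_succ, ih, if_neg k.succ_ne_zero, pow_succ, mul_assoc]

theorem pow_le_card_sphere (k : ℕ) : (2 * Fintype.card α - 1) ^ k ≤ #(sphere α k) := by
  cases k with
  | zero => simp [card_sphere_zero]
  | succ k => rw [card_sphere_succ_eq, pow_succ']; gcongr; omega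

theorem card_sphere_le [Nonempty α] (k : ℕ) : #(sphere α k) ≤ 2 * (2 * Fintype.card α - 1) ^ k := by
  have := Fintype.card_pos (α := α)
  cases k with
  | zero => simp [card_sphere_zero]
  | succ k => rw [card_sphere_succ_eq, pow_succ', ← mul_assoc]; gcongr; omega

theorem tsum_comp_norm_eq_sum_card_sphere {M : Type*} [AddCommMonoid M] [TopologicalSpace M]
    {u : ℕ → M} {n : ℕ} (hu : ∀ k, n < k → u k = 0) :
    ∑' g : FreeGroup α, u g.norm = ∑ k ∈ range (n + 1), #(sphere α k) • u k := by
  rw [tsum_eq_sum (s := (range (n + 1)).biUnion (sphere α)), sum_biUnion]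
  · refine sum_congr rfl fun k _ => ?_
    rw [← sum_const]
    exact sum_congr rfl fun g hg => by rw [mem_sphere.mp hg]
  · intro k _ l _ hkl
    exact disjoint_left.mpr fun g hk hl => hkl ((mem_sphere.mp hk).symm.trans (mem_sphere.mp hl))
  · intro g hg
    exact hu _ (by simpa using hg)

end Sphere

section MarkovOperator

variable [Fintype α]

theorem sum_inv_mk_singleton {M : Type*} [AddCommMonoid M] (F : FreeGroup α → M) :
    ∑ x : α × Bool, F (mk [x])⁻¹ = ∑ x : α × Bool, F (mk [x]) := by
  simp only [inv_mk, invRev, List.reverse_singleton, List.map_singleton]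
  exact Fintype.sum_equiv ((Equiv.refl α).prodCongr (Function.Involutive.toPerm _ Bool.not_not))
    _ _ fun x => rfl

noncomputable def markovOperator (f : FreeGroup α → ℝ≥0∞) (g : FreeGroup α) : ℝ≥0∞ :=
  (2 * (Fintype.card α : ℝ≥0∞))⁻¹ * ∑ x : α × Bool, f (mk [x] * g)

theorem tsum_markovOperator_mul (f f' : FreeGroup α → ℝ≥0∞) :
    ∑' g, markovOperator f g * f' g = ∑' g, f g * markovOperator f' g := by
  have reindex (x : α × Bool) :
      ∑' g, f (mk [x] * g) * f' g = ∑' g, f g * f' ((mk [x])⁻¹ * g) := by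
    conv_rhs => rw [← (Equiv.mulLeft (mk [x])).tsum_eq]
    simp only [Equiv.coe_mulLeft, inv_mul_cancel_left]
  simp only [markovOperator, mul_assoc, mul_left_comm (f _), sum_mul, mul_sum]
  rw [Summable.tsum_finsetSum fun _ _ => ENNReal.summable,
    Summable.tsum_finsetSum fun _ _ => ENNReal.summable]
  simp only [ENNReal.tsum_mul_left, reindex]
  exact sum_inv_mk_singleton fun y => _ * ∑' g, f g * f' (y * g)

theorem natCast_two_mul_card_sub_one_add_one [Nonempty α] :
    ((2 * Fintype.card α - 1 : ℕ) : ℝ≥0∞) + 1 = 2 * Fintype.card α := by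
  have := Fintype.card_pos (α := α)
  norm_cast
  omega

theorem markovOperator_comp_norm [DecidableEq α] [Nonempty α] (w : ℕ → ℝ≥0∞)
    (g : FreeGroup α) :
    markovOperator (fun h => w h.norm) g = radialStep (2 * Fintype.card α - 1) w g.norm := by
  rw [markovOperator, sum_norm_mk_singleton_mul]
  split_ifs with hg
  · rw [hg, norm_one, radialStep, nsmul_eq_mul, ← mul_assoc, Nat.cast_mul, Nat.cast_two,
      ENNReal.inv_mul_cancel (by simp) (by finiteness), one_mul]
  · obtain ⟨k, hk⟩ := Nat.exists_eq_add_one_of_ne_zero (mt norm_eq_zero.mp hg)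
    rw [hk, radialStep, natCast_two_mul_card_sub_one_add_one, nsmul_eq_mul]
    rfl

end MarkovOperator

section RandomWalk

variable [Fintype α] [MeasurableSpace (FreeGroup α)]

variable (α) in
noncomputable def simpleRandomWalk : Measure (FreeGroup α) :=
  (2 * (Fintype.card α : ℝ≥0∞))⁻¹ • ∑ i : α, (Measure.dirac (of i) + Measure.dirac (of i)⁻¹)

variable [MeasurableSingletonClass (FreeGroup α)]

theorem lintegral_simpleRandomWalk (f : FreeGroup α → ℝ≥0∞) :
    ∫⁻ x, f x ∂simpleRandomWalk α =
      (2 * (Fintype.card α : ℝ≥0∞))⁻¹ * ∑ x : α × Bool, f (mk [x]) := by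
  simp [simpleRandomWalk, lintegral_finsetSum_measure, Fintype.sum_prod_type, of, inv_mk, invRev,
    add_comm]

instance [Nonempty α] : IsProbabilityMeasure (simpleRandomWalk α) := by
  constructor
  rw [← lintegral_one, lintegral_simpleRandomWalk]
  simp only [sum_const, card_univ, Fintype.card_prod, Fintype.card_bool, nsmul_eq_mul, mul_one]
  rw [Nat.cast_mul, Nat.cast_two, mul_comm (Fintype.card α : ℝ≥0∞)]
  exact ENNReal.inv_mul_cancel (by simp) (by finiteness)

theorem convPow_simpleRandomWalk_succ_apply_singleton (n : ℕ) (g : FreeGroup α) :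
    convPow (simpleRandomWalk α) (n + 1) {g} =
      markovOperator (fun h => convPow (simpleRandomWalk α) n {h}) g := by
  rw [convPow_succ_apply_singleton, lintegral_simpleRandomWalk, markovOperator,
    sum_inv_mk_singleton fun y => convPow (simpleRandomWalk α) n {y * g}]

theorem tsum_convPow_simpleRandomWalk_succ_mul (n : ℕ) (f : FreeGroup α → ℝ≥0∞) :
    ∑' g, convPow (simpleRandomWalk α) (n + 1) {g} * f g =
      ∑' g, convPow (simpleRandomWalk α) n {g} * markovOperator f g := by
  simp only [convPow_simpleRandomWalk_succ_apply_singleton, tsum_markovOperator_mul]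

variable [DecidableEq α] [Nonempty α]

theorem convPow_simpleRandomWalk_apply_singleton (n : ℕ) (g : FreeGroup α) :
    convPow (simpleRandomWalk α) n {g} = radialDensity (2 * Fintype.card α - 1) n g.norm := by
  induction n generalizing g with
  | zero => simp [convPow, radialDensity, Set.indicator, eq_comm]
  | succ n ih =>
    rw [convPow_simpleRandomWalk_succ_apply_singleton]
    simp only [ih]
    exact markovOperator_comp_norm _ g

theorem tsum_convPow_simpleRandomWalk_mul_inv_two_pow_le (hα : 2 ≤ Fintype.card α) (n : ℕ) :
    ∑' g, convPow (simpleRandomWalk α) n {g} * 2⁻¹ ^ g.norm ≤ (7 / 8) ^ n := by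
  induction n with
  | zero =>
    rw [tsum_eq_single 1 fun g hg => by simp [convPow_simpleRandomWalk_apply_singleton,
      radialDensity, hg]]
    simp [convPow]
  | succ n ih =>
    calc ∑' g, convPow (simpleRandomWalk α) (n + 1) {g} * 2⁻¹ ^ g.norm
        = ∑' g, convPow (simpleRandomWalk α) n {g} *
            radialStep (2 * Fintype.card α - 1) (2⁻¹ ^ ·) g.norm := by
          rw [tsum_convPow_simpleRandomWalk_succ_mul]
          simp only [markovOperator_comp_norm (fun k => (2⁻¹ : ℝ≥0∞) ^ k)]
      _ ≤ ∑' g, 7 / 8 * (convPow (simpleRandomWalk α) n {g} * 2⁻¹ ^ g.norm) :=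
          ENNReal.tsum_le_tsum fun g => by
            rw [mul_left_comm]
            gcongr
            exact radialStep_inv_two_pow_le (by omega) _
      _ ≤ (7 / 8) ^ (n + 1) := by
          rw [ENNReal.tsum_mul_left, pow_succ']
          gcongr

theorem convPow_simpleRandomWalk_apply_one_le (hα : 2 ≤ Fintype.card α) (n : ℕ) :
    convPow (simpleRandomWalk α) n {1} ≤ (7 / 8) ^ n :=
  le_trans (by simpa using ENNReal.le_tsum (f := fun g =>
    convPow (simpleRandomWalk α) n {g} * 2⁻¹ ^ g.norm) 1)
    (tsum_convPow_simpleRandomWalk_mul_inv_two_pow_le hα n)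

variable (α) in
noncomputable def expectedNorm (n : ℕ) : ℝ≥0∞ :=
  ∑' g : FreeGroup α, convPow (simpleRandomWalk α) n {g} * g.norm

theorem expectedNorm_zero : expectedNorm α 0 = 0 :=
  ENNReal.tsum_eq_zero.mpr fun g => by
    by_cases hg : g = 1 <;> simp [convPow_simpleRandomWalk_apply_singleton, radialDensity, hg]

theorem expectedNorm_succ_add (n : ℕ) :
    expectedNorm α (n + 1) + (Fintype.card α : ℝ≥0∞)⁻¹ =
      expectedNorm α n + 1 + (Fintype.card α : ℝ≥0∞)⁻¹ * convPow (simpleRandomWalk α) n {1} := by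
  set ν := convPow (simpleRandomWalk α) n
  have hinv : 2 * (((2 * Fintype.card α - 1 : ℕ) : ℝ≥0∞) + 1)⁻¹ = (Fintype.card α : ℝ≥0∞)⁻¹ := by
    rw [natCast_two_mul_card_sub_one_add_one, ENNReal.mul_inv (by simp) (by simp), ← mul_assoc,
      ENNReal.mul_inv_cancel (by simp) (by simp), one_mul]
  calc expectedNorm α (n + 1) + (Fintype.card α : ℝ≥0∞)⁻¹
      = ∑' g, ν {g} * (radialStep (2 * Fintype.card α - 1) (↑) g.norm +
          2 * (((2 * Fintype.card α - 1 : ℕ) : ℝ≥0∞) + 1)⁻¹) := by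
        rw [expectedNorm, tsum_convPow_simpleRandomWalk_succ_mul]
        simp only [markovOperator_comp_norm (fun k => (k : ℝ≥0∞)), mul_add]
        rw [ENNReal.tsum_add, ENNReal.tsum_mul_right, tsum_convPow_apply_singleton, one_mul, hinv]
    _ = ∑' g, (ν {g} * g.norm + ν {g} +
          (Fintype.card α : ℝ≥0∞)⁻¹ * if g = 1 then ν {g} else 0) := by
        refine tsum_congr fun g => ?_
        rw [radialStep_natCast_add, hinv]
        by_cases hg : g = 1 <;> simp [hg] <;> ring
    _ = expectedNorm α n + 1 + (Fintype.card α : ℝ≥0∞)⁻¹ * ν {1} := by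
        rw [ENNReal.tsum_add, ENNReal.tsum_add, tsum_convPow_apply_singleton, ENNReal.tsum_mul_left,
          tsum_ite_eq]
        rfl

theorem expectedNorm_ne_top (n : ℕ) : expectedNorm α n ≠ ⊤ := by
  induction n with
  | zero => simp [expectedNorm_zero]
  | succ n ih =>
    refine ne_top_of_le_ne_top ?_ (le_self_add (b := (Fintype.card α : ℝ≥0∞)⁻¹))
    rw [expectedNorm_succ_add]
    finiteness

theorem expectedNorm_succ_toReal (n : ℕ) :
    (expectedNorm α (n + 1)).toReal = (expectedNorm α n).toReal + (1 - (Fintype.card α : ℝ)⁻¹) +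
      (Fintype.card α : ℝ)⁻¹ * (convPow (simpleRandomWalk α) n {1}).toReal := by
  have h := congrArg ENNReal.toReal (expectedNorm_succ_add (α := α) n)
  have hE := expectedNorm_ne_top (α := α)
  rw [ENNReal.toReal_add (hE _) (by simp), ENNReal.toReal_add (ENNReal.add_ne_top.mpr
    ⟨hE n, ENNReal.one_ne_top⟩) (by finiteness), ENNReal.toReal_add (hE n) ENNReal.one_ne_top] at h
  simp only [ENNReal.toReal_mul, ENNReal.toReal_inv, ENNReal.toReal_natCast,
    ENNReal.toReal_one] at h
  linarith

theorem expectedNorm_toReal_bounds (hα : 2 ≤ Fintype.card α) (n : ℕ) :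
    n * (1 - (Fintype.card α : ℝ)⁻¹) ≤ (expectedNorm α n).toReal ∧
      (expectedNorm α n).toReal ≤ n * (1 - (Fintype.card α : ℝ)⁻¹) + 8 := by
  set c := 1 - (Fintype.card α : ℝ)⁻¹
  have hinv : (Fintype.card α : ℝ)⁻¹ ≤ 1 := inv_le_one_of_one_le₀ (by exact_mod_cast (by omega))
  have key : ∀ n : ℕ, n * c ≤ (expectedNorm α n).toReal ∧
      (expectedNorm α n).toReal ≤ n * c + ∑ j ∈ range n, (7 / 8 : ℝ) ^ j := by
    intro n
    induction n with
    | zero => simp [expectedNorm_zero]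
    | succ n ih =>
      have hret : (convPow (simpleRandomWalk α) n {1}).toReal ≤ (7 / 8 : ℝ) ^ n := by
        simpa using ENNReal.toReal_mono (by finiteness) (convPow_simpleRandomWalk_apply_one_le hα n)
      have hret0 : 0 ≤ (Fintype.card α : ℝ)⁻¹ * (convPow (simpleRandomWalk α) n {1}).toReal := by
        positivity
      have hret1 : (Fintype.card α : ℝ)⁻¹ * (convPow (simpleRandomWalk α) n {1}).toReal ≤
          (7 / 8 : ℝ) ^ n :=
        (mul_le_of_le_one_left ENNReal.toReal_nonneg hinv).trans hret
      rw [expectedNorm_succ_toReal, sum_range_succ]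
      push_cast
      constructor <;> linarith [ih.1, ih.2]
  refine ⟨(key n).1, (key n).2.trans ?_⟩
  have := geom_sum_Ico_le_of_lt_one (x := (7 / 8 : ℝ)) (m := 0) (n := n) (by norm_num)
    (by norm_num)
  norm_num at this
  linarith

theorem tsum_convPow_simpleRandomWalk_eq_sum {u : ℝ → ℕ → ℝ} (hu : ∀ k, u 0 k = 0) (n : ℕ) :
    ∑' g, u (convPow (simpleRandomWalk α) n {g}).toReal g.norm =
      ∑ k ∈ range (n + 1),
        #(sphere α k) * u (radialDensity (2 * Fintype.card α - 1) n k).toReal k := by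
  simp only [convPow_simpleRandomWalk_apply_singleton, ← nsmul_eq_mul]
  exact tsum_comp_norm_eq_sum_card_sphere (u := fun k => u (radialDensity _ n k).toReal k)
    fun k hk => by simp [radialDensity_eq_zero_of_lt hk, hu]

theorem sum_card_sphere_mul_radialDensity (n : ℕ) :
    ∑ k ∈ range (n + 1),
      #(sphere α k) * (radialDensity (2 * Fintype.card α - 1) n k).toReal = 1 := by
  rw [← tsum_convPow_simpleRandomWalk_eq_sum (u := fun x _ => x) (fun _ => rfl),
    ← ENNReal.tsum_toReal_eq (fun _ => measure_ne_top _ _), tsum_convPow_apply_singleton,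
    ENNReal.toReal_one]

theorem expectedNorm_toReal_eq_sum (n : ℕ) :
    (expectedNorm α n).toReal = ∑ k ∈ range (n + 1),
      k * (#(sphere α k) * (radialDensity (2 * Fintype.card α - 1) n k).toReal) := by
  rw [expectedNorm, ENNReal.tsum_toReal_eq (fun _ => by finiteness)]
  simpa [mul_comm, mul_left_comm] using
    tsum_convPow_simpleRandomWalk_eq_sum (α := α) (u := fun x k => x * k) (by simp) n

theorem shannonEntropy_convPow_simpleRandomWalk (n : ℕ) :
    shannonEntropy (convPow (simpleRandomWalk α) n) = ∑ k ∈ range (n + 1),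
      #(sphere α k) * negMulLog (radialDensity (2 * Fintype.card α - 1) n k).toReal := by
  simpa [shannonEntropy, negMulLog] using
    tsum_convPow_simpleRandomWalk_eq_sum (α := α) (u := fun x _ => negMulLog x) (by simp) n

theorem shannonEntropy_convPow_simpleRandomWalk_bounds (hα : 2 ≤ Fintype.card α) (n : ℕ) :
    (expectedNorm α n).toReal * log (2 * Fintype.card α - 1 : ℕ) ≤
        shannonEntropy (convPow (simpleRandomWalk α) n) ∧
      shannonEntropy (convPow (simpleRandomWalk α) n) ≤
        (expectedNorm α n).toReal * log (2 * Fintype.card α - 1 : ℕ) + log 2 + log (n + 1) := by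
  rw [shannonEntropy_convPow_simpleRandomWalk, expectedNorm_toReal_eq_sum]
  exact sum_mul_negMulLog_bounds (by omega) (fun k => ⟨pow_le_card_sphere k, card_sphere_le k⟩)
    (fun _ => ENNReal.toReal_nonneg) (sum_card_sphere_mul_radialDensity n)

end RandomWalk

end FreeGroup

/-- For `d ≥ 2`, the Avez entropy of the simple random walk on the free group `F_d`,
driven by the uniform measure `μ` on the symmetric free generating set
`{a_1^{±1}, …, a_d^{±1}}` (each of the `2d` elements has mass `1/(2d)`), satisfies
`lim_n H(μ^{*n})/n = ((d−1)/d)·log(2d−1)`. -/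
theorem avez_entropy_free_group (d : ℕ) (hd : 2 ≤ d)
    [MeasurableSpace (FreeGroup (Fin d))] [MeasurableSingletonClass (FreeGroup (Fin d))]
    (μ : Measure (FreeGroup (Fin d)))
    (hμ : μ = (2 * (d : ENNReal))⁻¹ •
      ∑ i : Fin d, (Measure.dirac (FreeGroup.of i) + Measure.dirac (FreeGroup.of i)⁻¹)) :
    Tendsto (fun n : ℕ => shannonEntropy (convPow μ n) / n) atTop
      (𝓝 (((d : ℝ) - 1) / d * Real.log (2 * d - 1))) := by
  have : Nonempty (Fin d) := ⟨⟨0, by omega⟩⟩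
  have hcard : 2 ≤ Fintype.card (Fin d) := by simpa using hd
  obtain rfl : μ = FreeGroup.simpleRandomWalk (Fin d) := by
    rw [hμ, FreeGroup.simpleRandomWalk, Fintype.card_fin]
  set E := fun n => (FreeGroup.expectedNorm (Fin d) n).toReal
  set L := log (2 * Fintype.card (Fin d) - 1 : ℕ)
  set c := 1 - (Fintype.card (Fin d) : ℝ)⁻¹
  have hE_bounds := FreeGroup.expectedNorm_toReal_bounds hcard
  have hH_bounds := FreeGroup.shannonEntropy_convPow_simpleRandomWalk_bounds hcard
  have hlog (n : ℕ) : 0 ≤ log ((n : ℝ) + 1) := log_nonneg (by linarith [n.cast_nonneg (α := ℝ)])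
  have hE := tendsto_div_natCast_nhds_zero_of_le_log (r := fun n => E n - n * c) (C := 8)
    (fun n => by linarith [(hE_bounds n).1]) (fun n => by linarith [(hE_bounds n).2, hlog n])
  have hH := tendsto_div_natCast_nhds_zero_of_le_log
    (r := fun n => shannonEntropy (convPow (FreeGroup.simpleRandomWalk (Fin d)) n) - E n * L)
    (C := log 2)
    (fun n => by linarith [(hH_bounds n).1]) (fun n => by linarith [(hH_bounds n).2])
  have hlim := hH.add ((hE.add (tendsto_const_nhds (x := c))).const_mul L)
  have hval : 0 + L * (0 + c) = ((d : ℝ) - 1) / d * log (2 * d - 1) := by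
    simp only [L, c, Fintype.card_fin, Nat.cast_sub (by omega : 1 ≤ 2 * d)]
    push_cast
    field_simp
    ring
  rw [hval] at hlim
  refine hlim.congr' ?_
  filter_upwards [eventually_ne_atTop 0] with n hn
  field_simp
  ring
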